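/- Let D be an integral domain with quotient field K. If for every f ∈ Int(D) the two-variable polynomials f(X+Y) and f(XY) can each be written as finite sums Σᵢ gᵢ(X)hᵢ(Y) with gᵢ, hᵢ ∈ Int(D), then for any two WPC D-subalgebras B, B' of a D-torsion-free D-algebra C₀, the compositum (subalgebra generated by B and B') is again a WPC D-algebra. -/

import Mathlib

set_option linter.unusedSectionVars false
open Polynomial TensorProduct

variable (D K : Type*) [CommRing D] [IsDomain D] [Field K] [Algebra D K] [IsFractionRing D K]

/-- The ring of integer-valued polynomials `Int(D) ⊆ K[X]`. -/
noncomputable def IntD : Subalgebra D (Polynomial K) :=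
  ⨅ a : D, Subalgebra.comap ((Polynomial.aeval (algebraMap D K a)).restrictScalars D)
    (Algebra.ofId D K).range

theorem mem_IntD {f : Polynomial K} :
    f ∈ IntD D K ↔
      ∀ a : D, ∃ d : D, algebraMap D K d = Polynomial.eval (algebraMap D K a) f := by
  simp [IntD, Algebra.mem_iInf, Subalgebra.mem_comap, Algebra.ofId_apply, Algebra.mem_bot]

/-- `X` as an element of `Int(D)`. -/
noncomputable def Xint : IntD D K := ⟨Polynomial.X, (mem_IntD D K).mpr fun a => ⟨a, by simp⟩⟩

/-- The set of products `g(X)h(Y)` with `g, h ∈ Int(D)`, inside `K[X,Y]`. -/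
def prodSet : Set (MvPolynomial (Fin 2) K) :=
  {p | ∃ g ∈ IntD D K, ∃ h ∈ IntD D K,
    p = Polynomial.aeval (MvPolynomial.X 0) g * Polynomial.aeval (MvPolynomial.X 1) h}

/-- A `D`-subalgebra `S` of a `D`-torsion-free `D`-algebra is WPC if `f(S) ⊆ S`
for every integer-valued polynomial `f`, evaluation taking place in `K ⊗[D] C₀`. -/
def WPCsubA (C₀ : Type*) [CommRing C₀] [Algebra D C₀] (S : Subalgebra D C₀) : Prop :=
  ∀ f ∈ IntD D K, ∀ b ∈ S, ∃ c ∈ S,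
    Polynomial.aeval ((1 : K) ⊗ₜ[D] b) f = (1 : K) ⊗ₜ[D] c

/-! For a `D`-subalgebra `T` of `K ⊗[D] C₀`, the elements `u` with `f(u) ∈ T` for every
`f ∈ Int(D)` form a `D`-subalgebra: writing `f(X + Y) = Σ dᵢ gᵢ(X) hᵢ(Y)` gives
`f(u + v) = Σ dᵢ gᵢ(u) hᵢ(v) ∈ T`, and likewise for `f(uv)`. For `T` the image of `B ⊔ B'`
this subalgebra contains the images of `B` and `B'`, hence that of `B ⊔ B'`. -/

def IntDAddMulSplit : Prop :=
  ∀ f ∈ IntD D K,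
    aeval (MvPolynomial.X 0 + MvPolynomial.X 1 : MvPolynomial (Fin 2) K) f ∈
        Submodule.span D (prodSet D K) ∧
      aeval (MvPolynomial.X 0 * MvPolynomial.X 1 : MvPolynomial (Fin 2) K) f ∈
        Submodule.span D (prodSet D K)

section Stable

variable {D K}
variable {A : Type*} [CommRing A] [Algebra D A] [Algebra K A] [IsScalarTower D K A]

theorem aeval_algebraMap_mem_of_mem_IntD (T : Subalgebra D A) (d : D) {f : K[X]}
    (hf : f ∈ IntD D K) :
    aeval (algebraMap D A d) f ∈ T := by
  obtain ⟨e, he⟩ := (mem_IntD D K).mp hf d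
  rw [IsScalarTower.algebraMap_apply D K A, aeval_algebraMap_apply_eq_algebraMap_eval, ← he,
    ← IsScalarTower.algebraMap_apply]
  exact T.algebraMap_mem e

theorem mvAeval_mem_of_mem_span_prodSet (T : Subalgebra D A) {u v : A}
    (hu : ∀ g ∈ IntD D K, aeval u g ∈ T) (hv : ∀ h ∈ IntD D K, aeval v h ∈ T)
    {p : MvPolynomial (Fin 2) K} (hp : p ∈ Submodule.span D (prodSet D K)) :
    MvPolynomial.aeval ![u, v] p ∈ T := by
  induction hp using Submodule.span_induction with
  | mem p hp =>
    obtain ⟨g, hg, h, hh, rfl⟩ := hp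
    simp only [map_mul, ← aeval_algHom_apply, MvPolynomial.aeval_X]
    exact mul_mem (hu g hg) (hv h hh)
  | zero => simp
  | add p q _ _ hp hq => simpa using add_mem hp hq
  | smul d p _ hp =>
    rw [← IsScalarTower.algebraMap_smul K d p, map_smul, algebraMap_smul]
    exact T.smul_mem hp d

variable (K) in
def intDStable (hsplit : IntDAddMulSplit D K) (T : Subalgebra D A) : Subalgebra D A where
  carrier := {u | ∀ f ∈ IntD D K, aeval u f ∈ T}
  add_mem' {u v} hu hv f hf := by
    simpa [← aeval_algHom_apply] using
      mvAeval_mem_of_mem_span_prodSet T hu hv (hsplit f hf).1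
  mul_mem' {u v} hu hv f hf := by
    simpa [← aeval_algHom_apply] using
      mvAeval_mem_of_mem_span_prodSet T hu hv (hsplit f hf).2
  algebraMap_mem' d _ hf := aeval_algebraMap_mem_of_mem_IntD T d hf

end Stable

section WPC

variable {D K}
variable {C₀ : Type*} [CommRing C₀] [Algebra D C₀]

local notation "ι" => (Algebra.TensorProduct.includeRight : C₀ →ₐ[D] K ⊗[D] C₀)

theorem WPCsubA.le_comap_intDStable (hsplit : IntDAddMulSplit D K) {S S' : Subalgebra D C₀}
    (hS : WPCsubA D K C₀ S) (hle : S ≤ S') :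
    S ≤ (intDStable K hsplit (S'.map ι)).comap ι := fun b hb f hf => by
  obtain ⟨c, hc, hfc⟩ := hS f hf b hb
  exact ⟨c, hle hc, hfc.symm⟩

theorem WPCsubA.of_le_comap_intDStable (hsplit : IntDAddMulSplit D K) {S : Subalgebra D C₀}
    (hS : S ≤ (intDStable K hsplit (S.map ι)).comap ι) : WPCsubA D K C₀ S := fun f hf b hb => by
  obtain ⟨c, hc, hfc⟩ := hS hb f hf
  exact ⟨c, hc, hfc.symm⟩

end WPC

theorem stmt_6
    (hcomp : ∀ f ∈ IntD D K,
      Polynomial.aeval (MvPolynomial.X 0 + MvPolynomial.X 1 : MvPolynomial (Fin 2) K) f ∈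
          Submodule.span D (prodSet D K) ∧
        Polynomial.aeval (MvPolynomial.X 0 * MvPolynomial.X 1 : MvPolynomial (Fin 2) K) f ∈
          Submodule.span D (prodSet D K))
    (C₀ : Type*) [CommRing C₀] [Algebra D C₀]
    (B B' : Subalgebra D C₀) (hB : WPCsubA D K C₀ B) (hB' : WPCsubA D K C₀ B') :
    WPCsubA D K C₀ (B ⊔ B') :=
  .of_le_comap_intDStable hcomp <|
    sup_le (hB.le_comap_intDStable hcomp le_sup_left) (hB'.le_comap_intDStable hcomp le_sup_right)
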